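/- For all natural numbers k ≥ 1 and q ≥ 1 with n = k + q, the kernels of the two operators on H_{k,q} intersect trivially: ker(d̆_q : H_{k,q} → H_{k−1,q+1}) ∩ ker(d̆*_{q−1} : H_{k,q} → H_{k+1,q−1}) = {0}. -/

import Mathlib

open scoped BigOperators

noncomputable section

variable (F : Type*) [Field F] [CharZero F] (H : Type*) [AddCommGroup H] [Module F H]

/-- The `n`-th tensor power of `H` over `F`. -/
abbrev TP (n : ℕ) : Type _ := PiTensorProduct F (fun _ : Fin n => H)

/-- The action of a permutation `σ ∈ S_n` on the `n`-th tensor power,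
permuting the tensor factors. -/
def permMap (n : ℕ) (σ : Equiv.Perm (Fin n)) : TP F H n →ₗ[F] TP F H n :=
  (PiTensorProduct.reindex F (fun _ : Fin n => H) σ).toLinearMap

/-- Identification of tensor powers of equal degrees. -/
def tpCast {m m' : ℕ} (hm : m = m') : TP F H m →ₗ[F] TP F H m' :=
  (PiTensorProduct.reindex F (fun _ : Fin m => H) (finCongr hm)).toLinearMap

/-- The permutations of `{1, …, n}` moving only positions in `a`. -/
def permsOn (n : ℕ) (a : Finset (Fin n)) : Finset (Equiv.Perm (Fin n)) :=
  Finset.univ.filter fun σ => ∀ i, i ∉ a → σ i = i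

/-- `S_a`: symmetrisation over the positions in `a` (the average over all
permutations of the positions in `a`, fixing the other positions). -/
def symOn (n : ℕ) (a : Finset (Fin n)) : TP F H n →ₗ[F] TP F H n :=
  (a.card.factorial : F)⁻¹ • ∑ σ ∈ permsOn n a, permMap F H n σ

/-- `A_a`: skew-symmetrisation over the positions in `a` (the signed average over
all permutations of the positions in `a`, fixing the other positions). -/
def altOn (n : ℕ) (a : Finset (Fin n)) : TP F H n →ₗ[F] TP F H n :=
  (a.card.factorial : F)⁻¹ • ∑ σ ∈ permsOn n a, (Equiv.Perm.sign σ : ℤ) • permMap F H n σ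

/-- The first `k` positions of `{1, …, n}`. -/
def firstSet (n k : ℕ) : Finset (Fin n) := Finset.univ.filter fun i => (i : ℕ) < k

/-- The last `m` positions of `{1, …, n}`. -/
def lastSet (n m : ℕ) : Finset (Fin n) := Finset.univ.filter fun i => n - m ≤ (i : ℕ)

/-- `H^{⊙a,∧aᶜ}`: the image of `S_a ∘ A_{aᶜ}`, the subspace of `n`-tensors symmetric in
the positions of `a` and skew-symmetric in the positions of `aᶜ`. -/
def Hgen (n : ℕ) (a : Finset (Fin n)) : Submodule F (TP F H n) :=
  LinearMap.range (symOn F H n a ∘ₗ altOn F H n aᶜ)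

/-- `H_{k,n-k} = H^{⊙k} ⊗ H^{∧(n-k)}`: the subspace of `n`-tensors symmetric in the
first `k` positions and skew-symmetric in the remaining positions. -/
def Hmix (n k : ℕ) : Submodule F (TP F H n) := Hgen F H n (firstSet n k)

/-- `H^{⊙[k],∧[n-k]}`: the span of the subspaces `H^{⊙a,∧aᶜ}` over all `k`-element
subsets `a ⊆ {1, …, n}`. -/
def HmixSpan (n k : ℕ) : Submodule F (TP F H n) :=
  ⨆ a ∈ {a : Finset (Fin n) | a.card = k}, Hgen F H n a

/-- The global operator whose restriction to `H_{k,q}` (with `m = q + 1`, `n = k + q`)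
is `d̆_q`: skew-symmetrisation of the last `m` positions, scaled by `m`. -/
def dOp (n m : ℕ) : TP F H n →ₗ[F] TP F H n := (m : F) • altOn F H n (lastSet n m)

/-- The global operator whose restriction to `H_{k-1,q+1}` (with `m = k`, `n = k + q`)
is `d̆*_q`: symmetrisation of the first `m` positions, scaled by `m`. -/
def dStarOp (n m : ℕ) : TP F H n →ₗ[F] TP F H n := (m : F) • symOn F H n (firstSet n m)

/-- The elementary element `h₁⊙…⊙h_k ⊗ x₁∧…∧x_q` of `H_{k,q} ⊆ H^{⊗(k+q)}`. -/
def elem (k q : ℕ) (h : Fin k → H) (x : Fin q → H) : TP F H (k + q) :=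
  ∑ ρ : Equiv.Perm (Fin k), ∑ τ : Equiv.Perm (Fin q),
    (Equiv.Perm.sign τ : ℤ) •
      (PiTensorProduct.tprod F (Fin.append (h ∘ ρ) (x ∘ τ)) : TP F H (k + q))

/-!
Write `A`, `B` for the first `k` and the last `q` positions, `P = S_A ∘ A_B` for the projection
onto `H_{k,q}`, `c` for the last position of `A` and `d` for the first one of `B`. Splitting the
permutations of `B ∪ {c}` (of `A ∪ {d}`) into cosets of those of `B` (of `A`) shows that for
`v ∈ H_{k,q}`
  `d̆ v = v - ∑_{i ∈ B} (c i) v`   and   `d̆* v = v + ∑_{j ∈ A} (d j) v`.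
Under `P`, conjugating `(c i)` by `(c j)` and `(d j)` by `(d i)` both give `(j i)`, and the signs
cancel because `v` and `P` transform alike. Hence, with `M = ∑_{j,i} P ((j i) v)`,
  `k • P (d̆ v) = k v - M`   and   `q • P (d̆* v) = q v + M`,
so `(k + q) v = k • P (d̆ v) + q • P (d̆* v)`, which vanishes when `v` lies in both kernels.
-/

open Equiv Equiv.Perm Finset
open scoped Nat

section Permutations

variable {n : ℕ} {a : Finset (Fin n)} {σ τ : Perm (Fin n)}

theorem mem_permsOn : σ ∈ permsOn n a ↔ ∀ i ∉ a, σ i = i := by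
  simp [permsOn]

theorem permsOn_eq_permsOfFinset : permsOn n a = permsOfFinset a := by
  ext σ
  rw [mem_permsOn, mem_perms_of_finset_iff]
  exact ⟨fun h i hi => by_contra fun hia => hi (h i hia), fun h i hi => by_contra (hi ∘ h)⟩

theorem card_permsOn : #(permsOn n a) = (#a)! := by
  rw [permsOn_eq_permsOfFinset, card_perms_of_finset]

theorem mul_mem_permsOn_cancel_left (hσ : σ ∈ permsOn n a) :
    σ * τ ∈ permsOn n a ↔ τ ∈ permsOn n a := by
  simp only [mem_permsOn] at hσ ⊢
  refine ⟨fun h i hi => σ.injective ?_, fun h i hi => ?_⟩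
  · rw [← Perm.mul_apply, h i hi, hσ i hi]
  · rw [Perm.mul_apply, h i hi, hσ i hi]

theorem mul_mem_permsOn_cancel_right (hσ : σ ∈ permsOn n a) :
    τ * σ ∈ permsOn n a ↔ τ ∈ permsOn n a := by
  simp only [mem_permsOn] at hσ ⊢
  refine ⟨fun h i hi => ?_, fun h i hi => ?_⟩
  · rw [← hσ i hi, ← Perm.mul_apply, h i hi, hσ i hi]
  · rw [Perm.mul_apply, hσ i hi, h i hi]

theorem swap_mem_permsOn {i j : Fin n} (hi : i ∈ a) (hj : j ∈ a) : swap i j ∈ permsOn n a :=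
  mem_permsOn.2 fun _ hl => swap_apply_of_ne_of_ne (ne_of_mem_of_not_mem hi hl).symm
    (ne_of_mem_of_not_mem hj hl).symm

theorem sum_permsOn_mul_left {M : Type*} [AddCommMonoid M] (hσ : σ ∈ permsOn n a)
    (f : Perm (Fin n) → M) : ∑ τ ∈ permsOn n a, f (σ * τ) = ∑ τ ∈ permsOn n a, f τ :=
  sum_equiv (Equiv.mulLeft σ) (fun _ => (mul_mem_permsOn_cancel_left hσ).symm) fun _ _ => rfl

theorem sum_permsOn_mul_right {M : Type*} [AddCommMonoid M] (hσ : σ ∈ permsOn n a)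
    (f : Perm (Fin n) → M) : ∑ τ ∈ permsOn n a, f (τ * σ) = ∑ τ ∈ permsOn n a, f τ :=
  sum_equiv (Equiv.mulRight σ) (fun _ => (mul_mem_permsOn_cancel_right hσ).symm) fun _ _ => rfl

theorem commute_of_mem_permsOn {b : Finset (Fin n)} (hab : Disjoint a b) (hσ : σ ∈ permsOn n a)
    (hτ : τ ∈ permsOn n b) : Commute σ τ :=
  Perm.Disjoint.commute fun i =>
    if h : i ∈ a then .inr (mem_permsOn.1 hτ i (disjoint_left.1 hab h))
    else .inl (mem_permsOn.1 hσ i h)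

theorem permsOn_mono {b : Finset (Fin n)} (hab : a ⊆ b) (hσ : σ ∈ permsOn n a) :
    σ ∈ permsOn n b :=
  mem_permsOn.2 fun i hi => mem_permsOn.1 hσ i fun h => hi (hab h)

theorem apply_mem_of_mem_permsOn (hσ : σ ∈ permsOn n a) {i : Fin n} (hi : i ∈ a) :
    σ i ∈ a := by
  by_contra h
  rw [σ.injective (mem_permsOn.1 hσ _ h)] at h
  exact h hi

theorem mem_permsOn_of_mem_permsOn_insert {c : Fin n} (hσ : σ ∈ permsOn n (insert c a))
    (hσc : σ c = c) : σ ∈ permsOn n a :=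
  mem_permsOn.2 fun i hi => if h : i = c then h ▸ hσc else
    mem_permsOn.1 hσ i (by simp [h, hi])

theorem sum_permsOn_insert {M : Type*} [AddCommMonoid M] {c : Fin n} (hc : c ∉ a)
    (f : Perm (Fin n) → M) :
    ∑ σ ∈ permsOn n (insert c a), f σ
      = ∑ i ∈ insert c a, ∑ τ ∈ permsOn n a, f (swap c i * τ) := by
  rw [← sum_product']
  refine sum_nbij' (fun σ => (σ c, swap c (σ c) * σ)) (fun p => swap c p.1 * p.2) ?_ ?_ ?_ ?_ ?_
  · intro σ hσ
    have hσc : σ c ∈ insert c a := apply_mem_of_mem_permsOn hσ (mem_insert_self c a)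
    have hmem := (mul_mem_permsOn_cancel_right hσ).2 (swap_mem_permsOn (mem_insert_self c a) hσc)
    exact mem_product.2 ⟨hσc, mem_permsOn_of_mem_permsOn_insert hmem (by simp)⟩
  · rintro ⟨i, τ⟩ h
    obtain ⟨hi, hτ⟩ := mem_product.1 h
    exact (mul_mem_permsOn_cancel_right (permsOn_mono (subset_insert c a) hτ)).2
      (swap_mem_permsOn (mem_insert_self c a) hi)
  · intro σ _
    exact swap_mul_self_mul c (σ c) σ
  · rintro ⟨i, τ⟩ h
    have hτc : τ c = c := mem_permsOn.1 (mem_product.1 h).2 c hc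
    simp [hτc, swap_mul_self_mul]
  · intro σ _
    simp [swap_mul_self_mul]

end Permutations

section Averaging

variable {F : Type*} [Field F] {H : Type*} [AddCommGroup H] [Module F H] {n : ℕ}
  {a b : Finset (Fin n)} {σ τ : Perm (Fin n)}

theorem permMap_permMap (σ τ : Perm (Fin n)) (x : TP F H n) :
    permMap F H n σ (permMap F H n τ x) = permMap F H n (σ * τ) x :=
  PiTensorProduct.reindex_reindex τ σ x

theorem permMap_one (x : TP F H n) : permMap F H n 1 x = x :=
  congrArg (· x) (PiTensorProduct.reindex_refl (R := F) (s := fun _ : Fin n => H))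

theorem intCast_units_smul_smul_self {M : Type*} [AddCommGroup M] [Module F M] (u : ℤˣ) (x : M) :
    ((u : ℤ) : F) • ((u : ℤ) : F) • x = x := by
  rw [smul_smul, ← Int.cast_mul, ← Units.val_mul, Int.units_mul_self, Units.val_one,
    Int.cast_one, one_smul]

variable (F H) in
def avgOn (χ : Perm (Fin n) →* ℤˣ) (a : Finset (Fin n)) : TP F H n →ₗ[F] TP F H n :=
  ((#a)! : F)⁻¹ • ∑ σ ∈ permsOn n a, (χ σ : ℤ) • permMap F H n σ

theorem symOn_eq_avgOn : symOn F H n a = avgOn F H 1 a := by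
  simp [symOn, avgOn]

theorem altOn_eq_avgOn : altOn F H n a = avgOn F H sign a := rfl

def IsSemiInvariant (χ : Perm (Fin n) →* ℤˣ) (a : Finset (Fin n)) (v : TP F H n) : Prop :=
  ∀ σ ∈ permsOn n a, permMap F H n σ v = ((χ σ : ℤ) : F) • v

variable {χ : Perm (Fin n) →* ℤˣ}

theorem avgOn_apply (x : TP F H n) :
    avgOn F H χ a x
      = ((#a)! : F)⁻¹ • ∑ σ ∈ permsOn n a, ((χ σ : ℤ) : F) • permMap F H n σ x := by
  simp [avgOn, Int.cast_smul_eq_zsmul]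

theorem avgOn_of_isSemiInvariant [CharZero F] {v : TP F H n} (hv : IsSemiInvariant χ a v) :
    avgOn F H χ a v = v := by
  have hterm : ∀ σ ∈ permsOn n a, ((χ σ : ℤ) : F) • permMap F H n σ v = v := fun σ hσ => by
    rw [hv σ hσ, intCast_units_smul_smul_self]
  rw [avgOn_apply, sum_congr rfl hterm, sum_const, card_permsOn, ← Nat.cast_smul_eq_nsmul F,
    inv_smul_smul₀ (Nat.cast_ne_zero.2 (Nat.factorial_ne_zero _))]

theorem isSemiInvariant_avgOn (x : TP F H n) : IsSemiInvariant χ a (avgOn F H χ a x) := by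
  intro σ hσ
  rw [avgOn_apply, map_smul, smul_comm ((χ σ : ℤ) : F), map_sum]
  congr 1
  rw [← sum_permsOn_mul_left hσ fun τ => ((χ τ : ℤ) : F) • permMap F H n τ x, smul_sum]
  refine sum_congr rfl fun τ _ => ?_
  rw [map_smul, permMap_permMap, map_mul, Units.val_mul, Int.cast_mul, mul_smul,
    intCast_units_smul_smul_self]

theorem avgOn_permMap (hσ : σ ∈ permsOn n a) (x : TP F H n) :
    avgOn F H χ a (permMap F H n σ x) = ((χ σ : ℤ) : F) • avgOn F H χ a x := by
  rw [avgOn_apply, avgOn_apply, smul_comm ((χ σ : ℤ) : F)]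
  congr 1
  rw [← sum_permsOn_mul_right hσ fun τ => ((χ τ : ℤ) : F) • permMap F H n τ x, smul_sum]
  refine sum_congr rfl fun τ _ => ?_
  rw [permMap_permMap, map_mul, Units.val_mul, Int.cast_mul, mul_comm, mul_smul,
    intCast_units_smul_smul_self]

theorem permMap_avgOn_comm (hab : Disjoint a b) (hσ : σ ∈ permsOn n a) (x : TP F H n) :
    permMap F H n σ (avgOn F H χ b x) = avgOn F H χ b (permMap F H n σ x) := by
  simp only [avgOn_apply, map_smul, map_sum, permMap_permMap]
  congr 1
  refine sum_congr rfl fun τ hτ => ?_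
  rw [(commute_of_mem_permsOn hab hσ hτ).eq]

theorem card_succ_smul_avgOn_insert [CharZero F] {c : Fin n} (hc : c ∉ a) {v : TP F H n}
    (hv : IsSemiInvariant χ a v) :
    ((#a + 1 : ℕ) : F) • avgOn F H χ (insert c a) v
      = v + ∑ i ∈ a, ((χ (swap c i) : ℤ) : F) • permMap F H n (swap c i) v := by
  have hcoset : ∀ i,
      ∑ τ ∈ permsOn n a, ((χ (swap c i * τ) : ℤ) : F) • permMap F H n (swap c i * τ) v
      = ((#a)! : F) • ((χ (swap c i) : ℤ) : F) • permMap F H n (swap c i) v := fun i => by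
    rw [Nat.cast_smul_eq_nsmul, ← card_permsOn, ← sum_const]
    refine sum_congr rfl fun τ hτ => ?_
    rw [← permMap_permMap, hv τ hτ, map_smul, map_mul, Units.val_mul, Int.cast_mul, mul_smul,
      intCast_units_smul_smul_self]
  have hscalar : ((#a + 1 : ℕ) : F) * (((#a + 1)! : ℕ) : F)⁻¹ * ((#a)! : F) = 1 := by
    have : ((#a)! : F) ≠ 0 := Nat.cast_ne_zero.2 (Nat.factorial_ne_zero _)
    rw [Nat.factorial_succ, Nat.cast_mul]
    field_simp
  rw [avgOn_apply, sum_permsOn_insert hc, sum_congr rfl fun i _ => hcoset i, ← Finset.smul_sum,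
    sum_insert hc, swap_self, ← Equiv.Perm.one_def, map_one, Units.val_one, Int.cast_one, one_smul,
    permMap_one, card_insert_of_notMem hc, smul_smul, smul_smul, hscalar, one_smul]

theorem card_succ_smul_symOn_insert [CharZero F] {c : Fin n} (hc : c ∉ a) {v : TP F H n}
    (hv : IsSemiInvariant 1 a v) :
    ((#a + 1 : ℕ) : F) • symOn F H n (insert c a) v
      = v + ∑ i ∈ a, permMap F H n (swap c i) v := by
  rw [symOn_eq_avgOn, card_succ_smul_avgOn_insert hc hv]
  simp

theorem card_succ_smul_altOn_insert [CharZero F] {c : Fin n} (hc : c ∉ a) {v : TP F H n}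
    (hv : IsSemiInvariant sign a v) :
    ((#a + 1 : ℕ) : F) • altOn F H n (insert c a) v
      = v - ∑ i ∈ a, permMap F H n (swap c i) v := by
  have hsign : ∀ i ∈ a, ((sign (swap c i) : ℤ) : F) • permMap F H n (swap c i) v
      = -permMap F H n (swap c i) v := fun i hi => by
    rw [sign_swap (ne_of_mem_of_not_mem hi hc).symm]
    simp
  rw [altOn_eq_avgOn, card_succ_smul_avgOn_insert hc hv, sum_congr rfl hsign, sum_neg_distrib,
    sub_eq_add_neg]

end Averaging

section SymAlt

variable {F : Type*} [Field F] {H : Type*} [AddCommGroup H] [Module F H] {n : ℕ}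
  {A B : Finset (Fin n)} {v : TP F H n}

variable (F H) in
def symAlt (A B : Finset (Fin n)) : TP F H n →ₗ[F] TP F H n :=
  symOn F H n A ∘ₗ altOn F H n B

theorem symAlt_permMap_of_mem_left (hAB : Disjoint A B) {σ : Perm (Fin n)}
    (hσ : σ ∈ permsOn n A) (y : TP F H n) :
    symAlt F H A B (permMap F H n σ y) = symAlt F H A B y := by
  simp only [symAlt, LinearMap.comp_apply]
  rw [altOn_eq_avgOn, ← permMap_avgOn_comm hAB hσ, symOn_eq_avgOn,
    avgOn_permMap hσ, MonoidHom.one_apply, Units.val_one, Int.cast_one, one_smul]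

theorem symAlt_permMap_of_mem_right {τ : Perm (Fin n)} (hτ : τ ∈ permsOn n B) (y : TP F H n) :
    symAlt F H A B (permMap F H n τ y) = ((sign τ : ℤ) : F) • symAlt F H A B y := by
  rw [symAlt, LinearMap.comp_apply, altOn_eq_avgOn, avgOn_permMap hτ, map_smul]
  rfl

theorem symAlt_of_isSemiInvariant [CharZero F] (hA : IsSemiInvariant 1 A v)
    (hB : IsSemiInvariant sign B v) : symAlt F H A B v = v := by
  rw [symAlt, LinearMap.comp_apply, altOn_eq_avgOn, avgOn_of_isSemiInvariant hB, symOn_eq_avgOn,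
    avgOn_of_isSemiInvariant hA]

theorem isSemiInvariant_of_mem_Hgen {a : Finset (Fin n)} (hv : v ∈ Hgen F H n a) :
    IsSemiInvariant 1 a v ∧ IsSemiInvariant sign aᶜ v := by
  obtain ⟨w, rfl⟩ := hv
  refine ⟨fun σ hσ => ?_, fun τ hτ => ?_⟩
  · rw [LinearMap.comp_apply, symOn_eq_avgOn]
    exact isSemiInvariant_avgOn _ σ hσ
  · rw [LinearMap.comp_apply, symOn_eq_avgOn, permMap_avgOn_comm disjoint_compl_left hτ,
      altOn_eq_avgOn, isSemiInvariant_avgOn _ τ hτ, map_smul]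

theorem map_permMap_conj {P : TP F H n →ₗ[F] TP F H n} {g s : Perm (Fin n)} {ε : ℤˣ}
    (hP : ∀ y, P (permMap F H n g y) = ((ε : ℤ) : F) • P y)
    (hv : permMap F H n g v = ((ε : ℤ) : F) • v) :
    P (permMap F H n (g * s * g) v) = P (permMap F H n s v) := by
  rw [← permMap_permMap, ← permMap_permMap, hv, map_smul, map_smul, map_smul, hP,
    intCast_units_smul_smul_self]

theorem symAlt_permMap_swap_left (hAB : Disjoint A B) (hv : IsSemiInvariant 1 A v) {c j i : Fin n}
    (hc : c ∈ A) (hj : j ∈ A) (hi : i ∉ A) :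
    symAlt F H A B (permMap F H n (swap c i) v) = symAlt F H A B (permMap F H n (swap j i) v) := by
  have hg := swap_mem_permsOn hc hj
  rw [← swap_mul_swap_mul_swap (ne_of_mem_of_not_mem hc hi).symm
      (ne_of_mem_of_not_mem hj hi).symm,
    map_permMap_conj (ε := 1) (fun y => by simpa using symAlt_permMap_of_mem_left hAB hg y)
      (by simpa using hv _ hg), swap_comm]

theorem symAlt_permMap_swap_right (hv : IsSemiInvariant sign B v) {d i j : Fin n}
    (hd : d ∈ B) (hi : i ∈ B) (hj : j ∉ B) :
    symAlt F H A B (permMap F H n (swap d j) v) = symAlt F H A B (permMap F H n (swap j i) v) := by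
  have hg := swap_mem_permsOn hd hi
  rw [swap_comm j i, ← swap_mul_swap_mul_swap (ne_of_mem_of_not_mem hd hj).symm
      (ne_of_mem_of_not_mem hi hj).symm,
    map_permMap_conj (symAlt_permMap_of_mem_right hg) (hv _ hg), swap_comm]

theorem card_add_card_smul_eq [CharZero F] (hAB : Disjoint A B) (hA : IsSemiInvariant 1 A v)
    (hB : IsSemiInvariant sign B v) {c d : Fin n} (hc : c ∈ A) (hd : d ∈ B) :
    ((#A : F) + #B) • v
      = (#A : F) • symAlt F H A B (v - ∑ i ∈ B, permMap F H n (swap c i) v)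
        + (#B : F) • symAlt F H A B (v + ∑ j ∈ A, permMap F H n (swap d j) v) := by
  have hleft : (#A : F) • symAlt F H A B (∑ i ∈ B, permMap F H n (swap c i) v)
      = ∑ j ∈ A, ∑ i ∈ B, symAlt F H A B (permMap F H n (swap j i) v) := by
    rw [Nat.cast_smul_eq_nsmul, ← sum_const, map_sum]
    refine sum_congr rfl fun j hj => sum_congr rfl fun i hi => ?_
    exact symAlt_permMap_swap_left hAB hA hc hj (disjoint_right.1 hAB hi)
  have hright : (#B : F) • symAlt F H A B (∑ j ∈ A, permMap F H n (swap d j) v)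
      = ∑ i ∈ B, ∑ j ∈ A, symAlt F H A B (permMap F H n (swap j i) v) := by
    rw [Nat.cast_smul_eq_nsmul, ← sum_const, map_sum]
    refine sum_congr rfl fun i hi => sum_congr rfl fun j hj => ?_
    exact symAlt_permMap_swap_right hB hd hi (disjoint_left.1 hAB hj)
  rw [map_sub, map_add, symAlt_of_isSemiInvariant hA hB, smul_sub, smul_add, hleft, hright,
    sum_comm, add_smul]
  abel

end SymAlt

section IndexSets

variable {n : ℕ} {i : Fin n}

theorem mem_firstSet {k : ℕ} : i ∈ firstSet n k ↔ (i : ℕ) < k := by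
  simp [firstSet]

theorem mem_lastSet {m : ℕ} : i ∈ lastSet n m ↔ n - m ≤ (i : ℕ) := by
  simp [lastSet]

theorem compl_firstSet (k q : ℕ) : (firstSet (k + q) k)ᶜ = lastSet (k + q) q := by
  ext i
  simp only [mem_compl, mem_firstSet, mem_lastSet]
  omega

theorem card_firstSet {k : ℕ} (hk : k ≤ n) : #(firstSet n k) = k := by
  rw [firstSet, Fin.card_filter_val_lt, min_eq_right hk]

theorem card_lastSet (k q : ℕ) : #(lastSet (k + q) q) = q := by
  rw [← compl_firstSet, card_compl, Fintype.card_fin, card_firstSet (Nat.le_add_right k q)]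
  omega

theorem insert_firstSet {k : ℕ} (hi : (i : ℕ) = k) :
    insert i (firstSet n k) = firstSet n (k + 1) := by
  ext j
  simp only [mem_insert, mem_firstSet, Fin.ext_iff]
  omega

theorem insert_lastSet {m : ℕ} (hi : (i : ℕ) + (m + 1) = n) :
    insert i (lastSet n m) = lastSet n (m + 1) := by
  ext j
  simp only [mem_insert, mem_lastSet, Fin.ext_iff]
  omega

end IndexSets

/-- For all natural numbers `k ≥ 1` and `q ≥ 1` with `n = k + q`, the kernels
of `d̆_q : H_{k,q} → H_{k-1,q+1}` and `d̆*_{q-1} : H_{k,q} → H_{k+1,q-1}` intersect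
trivially. -/
theorem ker_dOp_inter_ker_dStarOp (k q : ℕ) (hk : 1 ≤ k) (hq : 1 ≤ q) :
    ∀ v ∈ Hmix F H (k + q) k,
      dOp F H (k + q) (q + 1) v = 0 → dStarOp F H (k + q) (k + 1) v = 0 → v = 0 := by
  intro v hv hdv hdstarv
  have hAB : Disjoint (firstSet (k + q) k) (lastSet (k + q) q) :=
    compl_firstSet k q ▸ disjoint_compl_right
  obtain ⟨hA, hB⟩ := isSemiInvariant_of_mem_Hgen hv
  rw [compl_firstSet] at hB
  let c : Fin (k + q) := ⟨k - 1, by omega⟩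
  let d : Fin (k + q) := ⟨k, by omega⟩
  have hc : c ∈ firstSet (k + q) k := mem_firstSet.2 (by simp [c]; omega)
  have hd : d ∈ lastSet (k + q) q := mem_lastSet.2 (by simp [d])
  have hker : v - ∑ i ∈ lastSet (k + q) q, permMap F H (k + q) (swap c i) v = 0 := by
    rw [← card_succ_smul_altOn_insert (disjoint_left.1 hAB hc) hB,
      insert_lastSet (by simp [c]; omega), card_lastSet]
    exact hdv
  have hker' : v + ∑ j ∈ firstSet (k + q) k, permMap F H (k + q) (swap d j) v = 0 := by
    rw [← card_succ_smul_symOn_insert (disjoint_right.1 hAB hd) hA, insert_firstSet rfl,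
      card_firstSet (Nat.le_add_right k q)]
    exact hdstarv
  have key := card_add_card_smul_eq hAB hA hB hc hd
  simp only [hker, hker', map_zero, smul_zero, add_zero, card_firstSet (Nat.le_add_right k q),
    card_lastSet] at key
  have hkq : (k : F) + q ≠ 0 := by norm_cast; omega
  exact (smul_eq_zero_iff_right hkq).1 key

end
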